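/- arXiv:2012.00243 — 3 statements merged into one kernel-verified Lean document; each statement's English description precedes it below -/
import Mathlib

section
/- Let G be a finite directed multigraph and v a vertex of G. Suppose there exists a vertex w (possibly equal to v) such that there is a (possibly empty) path from v to w and two different cycles pass through w. Then P(v,n), the number of paths of length exactly n starting at v, grows exponentially: there exist real constants C > D > 1 such that D^n ≤ P(v,n) ≤ C^n for all sufficiently large n. -/
/-- A finite directed multigraph: finitely many vertices, finitely many directed edges
(multiple edges between the same ordered pair of vertices are allowed). -/
structure DMGraph where
  V : Type
  E : Type
  fintV : Fintype V
  fintE : Fintype E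
  src : E → V
  tgt : E → V

attribute [instance] DMGraph.fintV DMGraph.fintE

namespace DMGraph

/-- `G.Path v w p` : the list of edges `p` is a path from `v` to `w`
(consecutive edges match head-to-tail; the empty path sits at a single vertex). -/
inductive Path (G : DMGraph) : G.V → G.V → List G.E → Prop
  | nil (v : G.V) : Path G v v []
  | cons (e : G.E) {w : G.V} {p : List G.E} :
      Path G (G.tgt e) w p → Path G (G.src e) w (e :: p)

/-- `w` is reachable from `v` by a (possibly empty) path. -/
def Reaches (G : DMGraph) (v w : G.V) : Prop := ∃ p : List G.E, G.Path v w p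

/-- `P(v,n)`: the number of different paths of length exactly `n` starting at `v`. -/
noncomputable def P (G : DMGraph) (v : G.V) (n : ℕ) : ℕ :=
  Nat.card {p : List G.E // p.length = n ∧ ∃ w, G.Path v w p}

/-- A cycle through `w`, written with base point `w`: a nonempty closed path from `w`
to `w` visiting no vertex twice (the visited vertices are the sources of its edges).
Cycles through `w` correspond bijectively to such based closed paths, so
"two different cycles pass through `w`" means two different such `p`'s. -/
def IsCycleAt (G : DMGraph) (w : G.V) (p : List G.E) : Prop :=
  p ≠ [] ∧ G.Path w w p ∧ (p.map G.src).Nodup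

end DMGraph

/-!
Since the two cycles `c₁ ≠ c₂` through `w` visit no vertex twice, the closed walks `c₁ ++ c₂` and
`c₂ ++ c₁` are distinct and of the same length `N`. Following a path `q` from `v` to `w` by any of
the `2 ^ k` words of length `k` in these two closed walks gives `2 ^ k` distinct paths of length
`|q| + k N`, so `P(v, n) ≥ 2 ^ (n / 2N)` for large `n`. Conversely a path of length `n` is a word
of length `n` in the edges, so `P(v, n) ≤ |E| ^ n`.
-/

open Filter

namespace List

variable {α : Type*}

theorem append_ne_append_comm_of_length_lt {l₁ l₂ : List α} (h₁ : l₁ ≠ []) (h₂ : l₂.Nodup)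
    (hlt : l₁.length < l₂.length) : l₁ ++ l₂ ≠ l₂ ++ l₁ := by
  intro h
  have hpos : 0 < l₁.length := length_pos_iff.mpr h₁
  have hget : l₂[0] = l₂[l₁.length] := by
    have := getElem_of_eq h (i := l₁.length) (by simp; omega)
    simpa [getElem_append_right, getElem_append_left hlt] using this
  exact hpos.ne (h₂.getElem_inj_iff.mp hget)

theorem append_ne_append_comm {l₁ l₂ : List α} (hne : l₁ ≠ l₂) (h₁ : l₁.Nodup) (h₂ : l₂.Nodup)
    (hnil₁ : l₁ ≠ []) (hnil₂ : l₂ ≠ []) : l₁ ++ l₂ ≠ l₂ ++ l₁ := by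
  rcases lt_trichotomy l₁.length l₂.length with hlt | heq | hgt
  · exact append_ne_append_comm_of_length_lt hnil₁ h₂ hlt
  · exact fun h => hne (append_inj h heq).1
  · exact (append_ne_append_comm_of_length_lt hnil₂ h₁ hgt).symm

def boolWord (a b : List α) (bs : List Bool) : List α :=
  (bs.map (cond · a b)).flatten

theorem length_boolWord {a b : List α} (hlen : a.length = b.length) (bs : List Bool) :
    (boolWord a b bs).length = bs.length * a.length := by
  induction bs with
  | nil => simp [boolWord]
  | cons x bs ih =>
    cases x <;> simp_all [boolWord, Nat.succ_mul, Nat.add_comm]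

theorem boolWord_inj {a b : List α} (hab : a ≠ b) (hlen : a.length = b.length)
    {bs₁ bs₂ : List Bool} (hbs : bs₁.length = bs₂.length)
    (h : boolWord a b bs₁ = boolWord a b bs₂) : bs₁ = bs₂ := by
  have hcond : Function.Injective (cond · a b) := by
    intro x y hxy
    cases x <;> cases y <;> simp_all [eq_comm]
  have hlengths (bs : List Bool) : (bs.map (cond · a b)).map length = replicate bs.length a.length := by
    rw [map_map, eq_replicate_iff]
    refine ⟨length_map _, fun n hn => ?_⟩
    obtain ⟨x, -, rfl⟩ := mem_map.mp hn
    cases x <;> simp [hlen]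
  refine map_injective_iff.mpr hcond (eq_iff_flatten_eq.mpr ⟨h, ?_⟩)
  rw [hlengths, hlengths, hbs]

end List

namespace DMGraph

variable {G : DMGraph}

theorem Path.append {v w u : G.V} {p q : List G.E} (hp : G.Path v w p) (hq : G.Path w u q) :
    G.Path v u (p ++ q) := by
  induction hp with
  | nil => exact hq
  | cons e _ ih => exact .cons e (ih hq)

theorem Path.take {v w : G.V} {p : List G.E} (hp : G.Path v w p) (n : ℕ) :
    ∃ x, G.Path v x (p.take n) := by
  induction hp generalizing n with
  | nil v => exact ⟨v, by simpa using Path.nil v⟩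
  | cons e _ ih =>
    cases n with
    | zero => exact ⟨_, .nil _⟩
    | succ n =>
      obtain ⟨x, hx⟩ := ih n
      exact ⟨x, .cons e hx⟩

theorem Path.flatten {w : G.V} {ps : List (List G.E)} (hps : ∀ p ∈ ps, G.Path w w p) :
    G.Path w w ps.flatten := by
  induction ps with
  | nil => exact .nil w
  | cons p ps ih =>
    exact (hps p (by simp)).append (ih fun p hp => hps p (by simp [hp]))

theorem Path.boolWord {w : G.V} {a b : List G.E} (ha : G.Path w w a) (hb : G.Path w w b)
    (bs : List Bool) : G.Path w w (List.boolWord a b bs) :=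
  Path.flatten fun p hp => by
    obtain ⟨x, -, rfl⟩ := List.mem_map.mp hp
    cases x
    exacts [hb, ha]

theorem IsCycleAt.nodup {w : G.V} {c : List G.E} (hc : G.IsCycleAt w c) : c.Nodup :=
  hc.2.2.of_map _

theorem IsCycleAt.append_ne_append {w : G.V} {c₁ c₂ : List G.E} (h₁ : G.IsCycleAt w c₁)
    (h₂ : G.IsCycleAt w c₂) (hne : c₁ ≠ c₂) : c₁ ++ c₂ ≠ c₂ ++ c₁ :=
  List.append_ne_append_comm hne h₁.nodup h₂.nodup h₁.1 h₂.1

abbrev PathsOfLength (G : DMGraph) (v : G.V) (n : ℕ) : Type :=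
  {p : List G.E // p.length = n ∧ ∃ w, G.Path v w p}

def PathsOfLength.toVector {v : G.V} {n : ℕ} (p : G.PathsOfLength v n) : List.Vector G.E n :=
  ⟨p.1, p.2.1⟩

theorem PathsOfLength.toVector_injective (v : G.V) (n : ℕ) :
    Function.Injective (toVector : G.PathsOfLength v n → List.Vector G.E n) :=
  fun _ _ h => Subtype.ext (congrArg List.Vector.toList h)

instance (v : G.V) (n : ℕ) : Finite (G.PathsOfLength v n) :=
  Finite.of_injective _ (PathsOfLength.toVector_injective v n)

theorem P_le_card_pow (v : G.V) (n : ℕ) : G.P v n ≤ Fintype.card G.E ^ n :=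
  calc G.P v n ≤ Nat.card (List.Vector G.E n) :=
        Nat.card_le_card_of_injective _ (PathsOfLength.toVector_injective v n)
    _ = Fintype.card G.E ^ n := by rw [Nat.card_eq_fintype_card, card_vector]

theorem two_pow_le_P {v w : G.V} {q a b : List G.E} (hq : G.Path v w q) (ha : G.Path w w a)
    (hb : G.Path w w b) (hab : a ≠ b) (hlen : a.length = b.length) (k r : ℕ)
    (hr : r ≤ a.length) : 2 ^ k ≤ G.P v (q.length + k * a.length + r) := by
  obtain ⟨x, hx⟩ := ha.take r
  let path (bs : List.Vector Bool k) : G.PathsOfLength v (q.length + k * a.length + r) :=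
    ⟨q ++ List.boolWord a b bs.1 ++ a.take r,
      by simp [List.length_boolWord hlen, bs.2, hr, Nat.add_assoc],
      x, (hq.append (ha.boolWord hb _)).append hx⟩
  have hpath : Function.Injective path := fun bs₁ bs₂ h =>
    Subtype.ext <| List.boolWord_inj hab hlen (by simp) <|
      List.append_cancel_left (List.append_cancel_right (congrArg Subtype.val h))
  calc 2 ^ k = Nat.card (List.Vector Bool k) := by
        rw [Nat.card_eq_fintype_card, card_vector, Fintype.card_bool]
    _ ≤ G.P v (q.length + k * a.length + r) := Nat.card_le_card_of_injective path hpath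

end DMGraph

theorem exists_one_lt_eventually_pow_le {f : ℕ → ℕ} {L N : ℕ} (hN : 0 < N)
    (h : ∀ k r, r < N → 2 ^ k ≤ f (L + k * N + r)) :
    ∃ D : ℝ, 1 < D ∧ ∀ᶠ n in atTop, D ^ n ≤ (f n : ℝ) := by
  set D : ℝ := 2 ^ ((2 * N : ℕ) : ℝ)⁻¹
  have hD : 1 < D := Real.one_lt_rpow one_lt_two (by positivity)
  have hD2 : D ^ (2 * N) = 2 := Real.rpow_inv_natCast_pow zero_le_two (by positivity)
  refine ⟨D, hD, eventually_atTop.mpr ⟨2 * L + 2 * N, fun n hn => ?_⟩⟩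
  obtain ⟨k, r, hr, rfl⟩ : ∃ k r, r < N ∧ L + k * N + r = n :=
    ⟨(n - L) / N, (n - L) % N, Nat.mod_lt _ hN, by have := Nat.div_add_mod' (n - L) N; omega⟩
  have hn2k : L + k * N + r ≤ 2 * N * k := by nlinarith
  calc D ^ (L + k * N + r) ≤ D ^ (2 * N * k) := pow_le_pow_right₀ hD.le hn2k
    _ = 2 ^ k := by rw [pow_mul, hD2]
    _ ≤ f (L + k * N + r) := mod_cast h k r hr

open DMGraph

/-- If some vertex `w` reachable from `v` has two different cycles
passing through it, then `P(v,n)` grows exponentially: there are reals `C > D > 1`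
with `D ^ n ≤ P(v,n) ≤ C ^ n` for all sufficiently large `n`. -/
theorem stmt2 (G : DMGraph) (v : G.V)
    (h : ∃ w : G.V, G.Reaches v w ∧
      ∃ c₁ c₂ : List G.E, c₁ ≠ c₂ ∧ G.IsCycleAt w c₁ ∧ G.IsCycleAt w c₂) :
    ∃ C D : ℝ, C > D ∧ D > 1 ∧
      ∀ᶠ n : ℕ in Filter.atTop,
        D ^ n ≤ (G.P v n : ℝ) ∧ (G.P v n : ℝ) ≤ C ^ n := by
  obtain ⟨w, ⟨q, hq⟩, c₁, c₂, hne, h₁, h₂⟩ := h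
  have hlen : (c₁ ++ c₂).length = (c₂ ++ c₁).length := by simp [Nat.add_comm]
  have hpos : 0 < (c₁ ++ c₂).length := by simpa using Or.inl (List.length_pos_iff.mpr h₁.1)
  obtain ⟨D, hD, hlower⟩ := exists_one_lt_eventually_pow_le hpos fun k r hr =>
    two_pow_le_P hq (h₁.2.1.append h₂.2.1) (h₂.2.1.append h₁.2.1)
      (h₁.append_ne_append h₂ hne) hlen k r hr.le
  have hE : (0 : ℝ) < Fintype.card G.E := by
    obtain ⟨e, -⟩ := List.exists_mem_of_ne_nil c₁ h₁.1
    exact_mod_cast Fintype.card_pos_iff.mpr ⟨e⟩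
  refine ⟨D + Fintype.card G.E, D, by linarith, hD, hlower.mono fun n hn => ⟨hn, ?_⟩⟩
  calc (G.P v n : ℝ) ≤ (Fintype.card G.E : ℝ) ^ n := by exact_mod_cast P_le_card_pow v n
    _ ≤ (D + Fintype.card G.E) ^ n := by gcongr; linarith
end

section
/- Let G be a finite directed multigraph with vertex set {v_1,…,v_N} and adjacency matrix A, where A_{ij} is the number of edges from v_i to v_j. Fix an index i, and let R_{n,i} denote the i-th row sum of A^n (equivalently, R_{n,i} = P(v_i,n), the number of paths of length n starting at v_i) and C_{n,i} the i-th column sum of A^n (the number of paths of length n ending at v_i). (1) If at least one cycle of G is reachable from v_i, then lim_{n→∞} (1/n)·log R_{n,i} exists and equals the maximum of log ρ(B) over all strongly connected components B of G that are reachable from v_i, where ρ(B) denotes the spectral radius of the adjacency matrix of B. (2) Symmetrically, if v_i is reachable from at least one cycle of G, then lim_{n→∞} (1/n)·log C_{n,i} exists and equals the maximum of log ρ(B) over all strongly connected components B from which v_i is reachable. -/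
/-- The spectral radius of a complex matrix: the maximum absolute value of its
complex eigenvalues. -/
noncomputable def specRad {ι : Type} [Finite ι] (M : Matrix ι ι ℂ) : ℝ :=
  letI : Fintype ι := Fintype.ofFinite ι
  letI : DecidableEq ι := Classical.decEq ι
  sSup ((fun z : ℂ => ‖z‖) '' spectrum ℂ M)

/-- Reachability in the directed multigraph whose adjacency matrix is `A`:
`b` is reachable from `a` by a path of some length `n ≥ 0` (paths of length `n`
from `a` to `b` are counted by `(A ^ n) a b`). -/
def Reach {N : ℕ} (A : Matrix (Fin N) (Fin N) ℕ) (a b : Fin N) : Prop :=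
  ∃ n : ℕ, 0 < (A ^ n) a b

/-- The strongly connected component of the vertex `j`. -/
def scc {N : ℕ} (A : Matrix (Fin N) (Fin N) ℕ) (j : Fin N) : Set (Fin N) :=
  {k | Reach A j k ∧ Reach A k j}

/-- The spectral radius of the adjacency matrix of the strongly connected component
of `j`. -/
noncomputable def sccRad {N : ℕ} (A : Matrix (Fin N) (Fin N) ℕ) (j : Fin N) : ℝ :=
  specRad (Matrix.of fun a b : ↥(scc A j) => ((A a.1 b.1 : ℕ) : ℂ))

/-!
Let `V` be the set of vertices reachable from `i`. Paths from `i` never leave `V`, so the row sum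
`R n` is at most `‖A_V ^ n‖` for the max-row-sum norm, and Gelfand's formula bounds the growth
rate of `R n` by `ρ(A_V)`. Conversely, in a strongly connected component `B` with an edge every
vertex has an outgoing edge, so row sums of `B ^ n` never decrease; walking from `i` into `B` and
then to a vertex of maximal row sum turns `ρ(B) ^ m ≤ ‖B ^ m‖` into `ρ(B) ^ (n - c) ≤ R n`.
In particular `ρ(B) ≤ ρ(A_V)` for every component reachable from `i`. Ordering vertices by the
colex order of their sets of ancestors makes `A_V` block triangular with the components as
diagonal blocks, so some reachable `B` has `ρ(B) = ρ(A_V)` and the two bounds meet. Columns are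
rows of the transpose.
-/

namespace PathGrowth

open Filter Topology
open scoped Matrix

-- Matrices carry the operator norm for the sup norm: the maximal row sum of absolute values.
attribute [local instance] Matrix.linftyOpNormedRing Matrix.linftyOpNormedAlgebra

lemma tendsto_const_mul_pow_rpow {K r : ℝ} (hK : 0 < K) (hr : 0 ≤ r) :
    Tendsto (fun n : ℕ => (K * r ^ n) ^ (1 / n : ℝ)) atTop (𝓝 r) := by
  have hKn : Tendsto (fun n : ℕ => K ^ (1 / n : ℝ)) atTop (𝓝 1) := by
    simpa using tendsto_const_nhds.rpow tendsto_one_div_atTop_nhds_zero_nat (Or.inl hK.ne')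
  refine ((hKn.mul_const r).congr' ?_).trans (by rw [one_mul])
  filter_upwards [eventually_ne_atTop 0] with n hn
  rw [Real.mul_rpow hK.le (by positivity), one_div, Real.pow_rpow_inv_natCast hr hn]

lemma tendsto_log_div_of_le_of_le {u w : ℕ → ℝ} {K r : ℝ} (hK : 0 < K) (hr : 0 < r)
    (hlow : ∀ᶠ n in atTop, K * r ^ n ≤ u n) (hup : ∀ᶠ n in atTop, u n ≤ w n)
    (hw : Tendsto (fun n : ℕ => w n ^ (1 / n : ℝ)) atTop (𝓝 r)) :
    Tendsto (fun n : ℕ => Real.log (u n) / n) atTop (𝓝 (Real.log r)) := by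
  have hpos : ∀ᶠ n in atTop, 0 < u n :=
    hlow.mono fun n hn => (by positivity : 0 < K * r ^ n).trans_le hn
  have hroot : Tendsto (fun n : ℕ => u n ^ (1 / n : ℝ)) atTop (𝓝 r) :=
    tendsto_of_tendsto_of_tendsto_of_le_of_le' (tendsto_const_mul_pow_rpow hK hr.le) hw
      (hlow.mono fun n hn => Real.rpow_le_rpow (by positivity) hn (by positivity))
      ((hup.and hpos).mono fun n hn => Real.rpow_le_rpow hn.2.le hn.1 (by positivity))
  refine ((Real.continuousAt_log hr.ne').tendsto.comp hroot).congr' ?_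
  filter_upwards [hpos] with n hn
  simp [Real.log_rpow hn, div_eq_inv_mul]

section SpectralRadius

variable {κ : Type} [Fintype κ] [DecidableEq κ]

lemma specRad_eq_sSup (M : Matrix κ κ ℂ) :
    specRad M = sSup ((fun z : ℂ => ‖z‖) '' spectrum ℂ M) := by
  unfold specRad
  rw [Subsingleton.elim (Fintype.ofFinite κ) ‹_›,
    Subsingleton.elim (Classical.decEq κ) ‹_›]

lemma specRad_nonneg (M : Matrix κ κ ℂ) : 0 ≤ specRad M := by
  rw [specRad_eq_sSup]
  exact Real.sSup_nonneg (by rintro _ ⟨z, -, rfl⟩; exact norm_nonneg z)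

lemma norm_le_specRad {M : Matrix κ κ ℂ} {z : ℂ} (hz : z ∈ spectrum ℂ M) :
    ‖z‖ ≤ specRad M := by
  rw [specRad_eq_sSup]
  exact le_csSup ((spectrum.isCompact M).image continuous_norm).bddAbove ⟨z, hz, rfl⟩

lemma exists_norm_eq_specRad [Nonempty κ] (M : Matrix κ κ ℂ) :
    ∃ z ∈ spectrum ℂ M, ‖z‖ = specRad M := by
  rw [specRad_eq_sSup]
  exact ((spectrum.isCompact M).image continuous_norm).sSup_mem ((spectrum.nonempty M).image _)

lemma spectralRadius_eq_ofReal_specRad (M : Matrix κ κ ℂ) :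
    spectralRadius ℂ M = ENNReal.ofReal (specRad M) := by
  rcases isEmpty_or_nonempty κ with hκ | hκ
  · simp [specRad_eq_sSup, spectrum.of_subsingleton, spectrum.SpectralRadius.of_subsingleton]
  refine le_antisymm (iSup₂_le fun z hz => ?_) ?_
  · rw [← ENNReal.ofReal_coe_nnreal, coe_nnnorm]
    exact ENNReal.ofReal_le_ofReal (norm_le_specRad hz)
  · obtain ⟨z, hz, hzM⟩ := exists_norm_eq_specRad M
    rw [← hzM, ← coe_nnnorm, ENNReal.ofReal_coe_nnreal]
    exact le_iSup₂ (f := fun k (_ : k ∈ spectrum ℂ M) => (‖k‖₊ : ENNReal)) z hz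

lemma tendsto_norm_pow_rpow_specRad (M : Matrix κ κ ℂ) :
    Tendsto (fun n : ℕ => ‖M ^ n‖ ^ (1 / n : ℝ)) atTop (𝓝 (specRad M)) := by
  have h := spectrum.pow_nnnorm_pow_one_div_tendsto_nhds_spectralRadius M
  rw [spectralRadius_eq_ofReal_specRad] at h
  convert (ENNReal.tendsto_toReal ENNReal.ofReal_ne_top).comp h using 1
  · ext n
    simp [← ENNReal.toReal_rpow]
  · rw [ENNReal.toReal_ofReal (specRad_nonneg M)]

lemma specRad_pow_le_norm_pow [Nonempty κ] (M : Matrix κ κ ℂ) {n : ℕ} (hn : 0 < n) :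
    specRad M ^ n ≤ ‖M ^ n‖ := by
  obtain ⟨z, hz, hzM⟩ := exists_norm_eq_specRad M
  rw [← hzM, ← norm_pow]
  exact spectrum.norm_le_norm_of_mem (by rw [spectrum.map_pow_of_pos M hn]; exact ⟨z, hz, rfl⟩)

lemma le_specRad_of_eventually_le_norm_pow (M : Matrix κ κ ℂ) {K r : ℝ} (hK : 0 < K)
    (hr : 0 ≤ r) (h : ∀ᶠ n in atTop, K * r ^ n ≤ ‖M ^ n‖) : r ≤ specRad M :=
  le_of_tendsto_of_tendsto (tendsto_const_mul_pow_rpow hK hr) (tendsto_norm_pow_rpow_specRad M)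
    (h.mono fun n hn => Real.rpow_le_rpow (by positivity) hn (by positivity))

lemma spectrum_reindex {κ' : Type} [Fintype κ'] [DecidableEq κ'] (e : κ ≃ κ')
    (M : Matrix κ κ ℂ) :
    spectrum ℂ (Matrix.reindex e e M) = spectrum ℂ M := by
  ext z
  simp only [Matrix.mem_spectrum_iff_isRoot_charpoly, Matrix.charpoly_reindex]

lemma specRad_transpose (M : Matrix κ κ ℂ) : specRad Mᵀ = specRad M := by
  have : spectrum ℂ Mᵀ = spectrum ℂ M := by
    ext z
    simp [Matrix.mem_spectrum_iff_isRoot_charpoly, Matrix.charpoly_transpose]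
  rw [specRad_eq_sSup, specRad_eq_sSup, this]

lemma _root_.Matrix.BlockTriangular.exists_mem_spectrum_toSquareBlock {K α : Type} [Field K]
    [LinearOrder α] {M : Matrix κ κ K} {b : κ → α} (hM : M.BlockTriangular b) {z : K}
    (hz : z ∈ spectrum K M) : ∃ a, z ∈ spectrum K (M.toSquareBlock b (b a)) := by
  rw [Matrix.mem_spectrum_iff_isRoot_charpoly, hM.charpoly, Polynomial.IsRoot,
    Polynomial.eval_prod, Finset.prod_eq_zero_iff] at hz
  obtain ⟨_, hk, hzk⟩ := hz
  obtain ⟨a, -, rfl⟩ := Finset.mem_image.mp hk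
  exact ⟨a, Matrix.mem_spectrum_iff_isRoot_charpoly.mpr hzk⟩

end SpectralRadius

section NatMatrix

variable {κ : Type} [Fintype κ] [DecidableEq κ]

abbrev toComplex (M : Matrix κ κ ℕ) : Matrix κ κ ℂ := M.map (Nat.castRingHom ℂ)

abbrev restrict {R : Type} (M : Matrix κ κ R) (S : Set κ) : Matrix S S R :=
  M.submatrix (↑) (↑)

def IsStronglyConnected (M : Matrix κ κ ℕ) : Prop := ∀ a b, ∃ n, 0 < (M ^ n) a b

lemma toComplex_pow (M : Matrix κ κ ℕ) (n : ℕ) : toComplex M ^ n = toComplex (M ^ n) :=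
  (M.map_pow _ n).symm

lemma norm_toComplex (M : Matrix κ κ ℕ) :
    ‖toComplex M‖ = ((Finset.univ.sup fun a => ∑ b, M a b : ℕ) : ℝ) := by
  rw [Matrix.linfty_opNorm_def, ← NNReal.coe_natCast, Nat.cast_finsetSup]
  simp

lemma rowSum_le_norm_toComplex (M : Matrix κ κ ℕ) (a : κ) :
    ((∑ b, M a b : ℕ) : ℝ) ≤ ‖toComplex M‖ := by
  rw [norm_toComplex]
  exact_mod_cast Finset.le_sup (f := fun a => ∑ b, M a b) (Finset.mem_univ a)

lemma exists_norm_toComplex_le_rowSum [Nonempty κ] (M : Matrix κ κ ℕ) :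
    ∃ a, ‖toComplex M‖ ≤ ((∑ b, M a b : ℕ) : ℝ) := by
  obtain ⟨a, -, ha⟩ := Finset.exists_mem_eq_sup Finset.univ Finset.univ_nonempty
    fun a => ∑ b, M a b
  exact ⟨a, by rw [norm_toComplex, ha]⟩

lemma pow_apply_mul_pow_apply_le (M : Matrix κ κ ℕ) (p q : ℕ) (a c b : κ) :
    (M ^ p) a c * (M ^ q) c b ≤ (M ^ (p + q)) a b := by
  rw [pow_add, Matrix.mul_apply]
  exact Finset.single_le_sum (f := fun c => (M ^ p) a c * (M ^ q) c b)
    (fun _ _ => Nat.zero_le _) (Finset.mem_univ c)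

lemma pow_apply_mul_rowSum_le (M : Matrix κ κ ℕ) (p q : ℕ) (a c : κ) :
    (M ^ p) a c * ∑ b, (M ^ q) c b ≤ ∑ b, (M ^ (p + q)) a b := by
  rw [Finset.mul_sum]
  exact Finset.sum_le_sum fun b _ => pow_apply_mul_pow_apply_le M p q a c b

lemma exists_pos_of_pow_add_apply_pos {M : Matrix κ κ ℕ} {p q : ℕ} {a b : κ}
    (h : 0 < (M ^ (p + q)) a b) : ∃ c, 0 < (M ^ p) a c ∧ 0 < (M ^ q) c b := by
  rw [pow_add, Matrix.mul_apply] at h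
  obtain ⟨c, -, hc⟩ := Finset.sum_pos_iff.mp h
  exact ⟨c, CanonicallyOrderedAdd.mul_pos.mp hc⟩

lemma rowSum_pow_monotone {M : Matrix κ κ ℕ} (hM : ∀ c, ∃ c', 0 < M c c') (a : κ) :
    Monotone fun n => ∑ b, (M ^ n) a b := by
  refine monotone_nat_of_le_succ fun n => ?_
  have hrow : ∀ c, 1 ≤ ∑ b, M c b := fun c =>
    let ⟨c', hc'⟩ := hM c
    hc'.trans_le (Finset.single_le_sum (f := M c) (fun _ _ => Nat.zero_le _) (Finset.mem_univ c'))
  calc ∑ c, (M ^ n) a c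
      ≤ ∑ c, (M ^ n) a c * ∑ b, M c b :=
        Finset.sum_le_sum fun c _ => Nat.le_mul_of_pos_right _ (hrow c)
    _ = ∑ b, (M ^ (n + 1)) a b := by
        simp_rw [Finset.mul_sum, pow_succ, Matrix.mul_apply]
        exact Finset.sum_comm

namespace IsStronglyConnected

variable {M : Matrix κ κ ℕ} (hM : IsStronglyConnected M)
include hM

lemma exists_pos_apply {a b : κ} (hab : 0 < M a b) (c : κ) : ∃ c', 0 < M c c' := by
  obtain ⟨n, hn⟩ := hM c a
  rcases n with _ | n
  · obtain rfl : c = a := by by_contra h; simp [h] at hn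
    exact ⟨b, hab⟩
  · rw [add_comm] at hn
    obtain ⟨c', hc', -⟩ := exists_pos_of_pow_add_apply_pos hn
    exact ⟨c', by simpa using hc'⟩

/-- Walk from `a₀` to a vertex `k` of maximal row sum, then keep walking: row sums never drop
since every vertex has an outgoing edge. -/
lemma exists_norm_pow_le_rowSum_pow_add {a b : κ} (hab : 0 < M a b) (a₀ : κ) :
    ∃ D, ∀ m, ‖toComplex (M ^ m)‖ ≤ ((∑ b, (M ^ (m + D)) a₀ b : ℕ) : ℝ) := by
  have : Nonempty κ := ⟨a⟩
  choose d hd using hM a₀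
  refine ⟨Finset.univ.sup d, fun m => ?_⟩
  obtain ⟨k, hk⟩ := exists_norm_toComplex_le_rowSum (M ^ m)
  refine hk.trans (Nat.cast_le.mpr ?_)
  calc ∑ b, (M ^ m) k b
      ≤ (M ^ d k) a₀ k * ∑ b, (M ^ m) k b := Nat.le_mul_of_pos_left _ (hd k)
    _ ≤ ∑ b, (M ^ (d k + m)) a₀ b := pow_apply_mul_rowSum_le M _ _ _ _
    _ ≤ ∑ b, (M ^ (m + Finset.univ.sup d)) a₀ b :=
        rowSum_pow_monotone (hM.exists_pos_apply hab) a₀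
          (by have := Finset.le_sup (f := d) (Finset.mem_univ k); omega)

lemma one_le_specRad {a b : κ} (hab : 0 < M a b) : 1 ≤ specRad (toComplex M) := by
  refine le_specRad_of_eventually_le_norm_pow _ one_pos zero_le_one
    (Eventually.of_forall fun n => ?_)
  calc (1 : ℝ) * 1 ^ n = ((∑ b, (M ^ 0) a b : ℕ) : ℝ) := by simp [Matrix.one_apply]
    _ ≤ ((∑ b, (M ^ n) a b : ℕ) : ℝ) :=
        Nat.cast_le.mpr (rowSum_pow_monotone (hM.exists_pos_apply hab) a (Nat.zero_le n))
    _ ≤ ‖toComplex M ^ n‖ := toComplex_pow M n ▸ rowSum_le_norm_toComplex _ a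

end IsStronglyConnected

lemma exists_pos_apply_of_specRad_pos [Nonempty κ] {M : Matrix κ κ ℕ}
    (h : 0 < specRad (toComplex M)) : ∃ a b, 0 < M a b := by
  obtain ⟨a, ha⟩ := exists_norm_toComplex_le_rowSum M
  have hrow : 0 < ∑ b, M a b := by
    have := specRad_pow_le_norm_pow (toComplex M) one_pos
    rw [pow_one, pow_one] at this
    exact_mod_cast h.trans_le (this.trans ha)
  obtain ⟨b, -, hb⟩ := Finset.sum_pos_iff.mp hrow
  exact ⟨a, b, hb⟩

end NatMatrix

section Digraph

open scoped Classical

variable {N : ℕ} (A : Matrix (Fin N) (Fin N) ℕ)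

lemma reach_refl (a : Fin N) : Reach A a a := ⟨0, by simp⟩

variable {A} in
lemma Reach.trans {a b c : Fin N} (hab : Reach A a b) (hbc : Reach A b c) : Reach A a c := by
  obtain ⟨p, hp⟩ := hab
  obtain ⟨q, hq⟩ := hbc
  exact ⟨p + q, (Nat.mul_pos hp hq).trans_le (pow_apply_mul_pow_apply_le A p q a b c)⟩

lemma reach_of_pos {a b : Fin N} (h : 0 < A a b) : Reach A a b := ⟨1, by simpa using h⟩

lemma mem_scc_self (j : Fin N) : j ∈ scc A j := ⟨reach_refl A j, reach_refl A j⟩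

lemma reach_transpose {a b : Fin N} : Reach Aᵀ a b ↔ Reach A b a := by
  simp [Reach, ← Matrix.transpose_pow]

lemma scc_transpose (j : Fin N) : scc Aᵀ j = scc A j := by
  ext k
  simp [scc, reach_transpose, and_comm]

def IsPathConvex (S : Set (Fin N)) : Prop :=
  ∀ ⦃a b c⦄, a ∈ S → b ∈ S → Reach A a c → Reach A c b → c ∈ S

lemma isPathConvex_reachSet (i : Fin N) : IsPathConvex A {k | Reach A i k} :=
  fun _ _ _ ha _ hac _ => Reach.trans ha hac

lemma isPathConvex_scc (j : Fin N) : IsPathConvex A (scc A j) :=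
  fun _ _ _ ha hb hac hcb => ⟨Reach.trans ha.1 hac, Reach.trans hcb hb.2⟩

variable {A}

lemma restrict_pow_apply {S : Set (Fin N)} (hS : IsPathConvex A S) (n : ℕ) (a b : S) :
    (restrict A S ^ n) a b = (A ^ n) a b := by
  induction n generalizing a with
  | zero => simp [Matrix.one_apply, Subtype.ext_iff]
  | succ n ih =>
    rw [pow_succ', Matrix.mul_apply, pow_succ', Matrix.mul_apply]
    refine (Finset.sum_congr_set S _ _ (fun c hc => by rw [ih]; rfl) fun c hc => ?_).symm
    by_contra hne
    obtain ⟨hac, hcb⟩ := CanonicallyOrderedAdd.mul_pos.mp (Nat.pos_of_ne_zero hne)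
    exact hc (hS a.2 b.2 (reach_of_pos A hac) ⟨n, hcb⟩)

lemma rowSum_restrict_pow_le {S : Set (Fin N)} (hS : IsPathConvex A S) (n : ℕ) (a : S) :
    ∑ b, (restrict A S ^ n) a b ≤ ∑ b, (A ^ n) a b := by
  simp_rw [restrict_pow_apply hS]
  rw [← Fintype.sum_subtype_add_sum_subtype (· ∈ S)]
  exact Nat.le_add_right _ _

lemma isStronglyConnected_restrict_scc (j : Fin N) :
    IsStronglyConnected (restrict A (scc A j)) := by
  rintro ⟨a, ha⟩ ⟨b, hb⟩
  obtain ⟨n, hn⟩ := Reach.trans ha.2 hb.1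
  exact ⟨n, by rwa [restrict_pow_apply (isPathConvex_scc A j)]⟩

lemma sccRad_eq (j : Fin N) : sccRad A j = specRad (toComplex (restrict A (scc A j))) := by
  rw [sccRad, specRad_eq_sSup, specRad_eq_sSup]
  rfl

variable (A) in
lemma sccRad_transpose (j : Fin N) : sccRad Aᵀ j = sccRad A j := by
  rw [sccRad_eq, sccRad_eq, scc_transpose]
  exact specRad_transpose _

end Digraph

section Growth

open scoped Classical

variable {N : ℕ} {A : Matrix (Fin N) (Fin N) ℕ}

lemma sccRad_nonneg (j : Fin N) : 0 ≤ sccRad A j := by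
  rw [sccRad_eq]
  exact specRad_nonneg _

lemma exists_pos_restrict_scc_of_cycle {j : Fin N} {m : ℕ} (hm : 1 ≤ m) (h : 0 < (A ^ m) j j) :
    ∃ a b, 0 < restrict A (scc A j) a b := by
  obtain ⟨k, rfl⟩ := Nat.exists_eq_add_of_le hm
  obtain ⟨c, hjc, hcj⟩ := exists_pos_of_pow_add_apply_pos h
  rw [pow_one] at hjc
  exact ⟨⟨j, mem_scc_self A j⟩, ⟨c, reach_of_pos A hjc, ⟨k, hcj⟩⟩, hjc⟩

lemma exists_pos_restrict_scc_of_sccRad_pos {j : Fin N} (h : 0 < sccRad A j) :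
    ∃ a b, 0 < restrict A (scc A j) a b := by
  have : Nonempty (scc A j) := ⟨⟨j, mem_scc_self A j⟩⟩
  rw [sccRad_eq] at h
  exact exists_pos_apply_of_specRad_pos h

lemma one_le_sccRad {j : Fin N} (hedge : ∃ a b, 0 < restrict A (scc A j) a b) :
    1 ≤ sccRad A j := by
  obtain ⟨a, b, hab⟩ := hedge
  rw [sccRad_eq]
  exact (isStronglyConnected_restrict_scc j).one_le_specRad hab

lemma exists_const_mul_sccRad_pow_le_rowSum {i j : Fin N} (hij : Reach A i j)
    (hedge : ∃ a b, 0 < restrict A (scc A j) a b) :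
    ∃ K > 0, ∀ᶠ n in atTop, K * sccRad A j ^ n ≤ ((∑ b, (A ^ n) i b : ℕ) : ℝ) := by
  obtain ⟨a, b, hab⟩ := hedge
  have hρ : 0 < sccRad A j := one_pos.trans_le (one_le_sccRad ⟨a, b, hab⟩)
  have : Nonempty (scc A j) := ⟨a⟩
  obtain ⟨D, hD⟩ := (isStronglyConnected_restrict_scc j).exists_norm_pow_le_rowSum_pow_add hab
    ⟨j, mem_scc_self A j⟩
  obtain ⟨ℓ, hℓ⟩ := hij
  refine ⟨(sccRad A j ^ (ℓ + D))⁻¹, by positivity, ?_⟩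
  filter_upwards [eventually_gt_atTop (ℓ + D)] with n hn
  set m := n - (ℓ + D)
  have hpaths : ∑ b, (restrict A (scc A j) ^ (m + D)) ⟨j, mem_scc_self A j⟩ b
      ≤ ∑ b, (A ^ n) i b :=
    calc _ ≤ ∑ b, (A ^ (m + D)) j b := rowSum_restrict_pow_le (isPathConvex_scc A j) _ _
      _ ≤ (A ^ ℓ) i j * ∑ b, (A ^ (m + D)) j b := Nat.le_mul_of_pos_left _ hℓ
      _ ≤ ∑ b, (A ^ n) i b := by
        convert pow_apply_mul_rowSum_le A ℓ (m + D) i j using 4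
        omega
  calc (sccRad A j ^ (ℓ + D))⁻¹ * sccRad A j ^ n = sccRad A j ^ m := by
        rw [pow_sub₀ _ hρ.ne' hn.le, mul_comm]
    _ ≤ ‖toComplex (restrict A (scc A j)) ^ m‖ := by
        rw [sccRad_eq]
        exact specRad_pow_le_norm_pow _ (Nat.sub_pos_of_lt hn)
    _ ≤ _ := by
        rw [toComplex_pow]
        exact (hD m).trans (Nat.cast_le.mpr hpaths)

lemma rowSum_pow_le_norm_restrict_reachSet (i : Fin N) (n : ℕ) :
    ((∑ b, (A ^ n) i b : ℕ) : ℝ) ≤ ‖toComplex (restrict A {k | Reach A i k}) ^ n‖ := by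
  rw [toComplex_pow]
  refine le_of_eq_of_le ?_ (rowSum_le_norm_toComplex _ ⟨i, reach_refl A i⟩)
  congr 1
  refine Finset.sum_congr_set _ _ _
    (fun b hb => (restrict_pow_apply (isPathConvex_reachSet A i) n ⟨i, _⟩ ⟨b, hb⟩).symm)
    fun b hb => ?_
  by_contra h
  exact hb ⟨n, Nat.pos_of_ne_zero h⟩

variable (A) in
noncomputable def coreach (a : Fin N) : Finset (Fin N) := Finset.univ.filter (Reach A · a)

lemma coreach_subset_coreach {a b : Fin N} (h : Reach A a b) : coreach A a ⊆ coreach A b := by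
  intro k hk
  simp only [coreach, Finset.mem_filter, Finset.mem_univ, true_and] at hk ⊢
  exact Reach.trans hk h

lemma coreach_eq_coreach_iff {a b : Fin N} : coreach A b = coreach A a ↔ b ∈ scc A a := by
  refine ⟨fun h => ⟨?_, ?_⟩, fun h => (coreach_subset_coreach h.2).antisymm
    (coreach_subset_coreach h.1)⟩
  · have ha : a ∈ coreach A b := h ▸ by simp [coreach, reach_refl]
    simpa [coreach] using ha
  · have hb : b ∈ coreach A a := h ▸ by simp [coreach, reach_refl]
    simpa [coreach] using hb

/-- Ordering vertices by the colex order of their sets of ancestors makes the adjacency matrix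
block triangular, with the strongly connected components as diagonal blocks. -/
lemma exists_reach_specRad_restrict_reachSet_le_sccRad (i : Fin N) :
    ∃ j, Reach A i j ∧ specRad (toComplex (restrict A {k | Reach A i k})) ≤ sccRad A j := by
  set V := {k | Reach A i k}
  have : Nonempty V := ⟨⟨i, reach_refl A i⟩⟩
  obtain ⟨z, hz, hzρ⟩ := exists_norm_eq_specRad (toComplex (restrict A V))
  let b : V → Colex (Finset (Fin N)) := fun x => toColex (coreach A x)
  have hb : (toComplex (restrict A V)).BlockTriangular b := by
    intro x y hyx
    by_contra hne
    have hxy : 0 < A x y := Nat.pos_of_ne_zero (by simpa using hne)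
    exact (Finset.Colex.toColex_le_toColex_of_subset
      (coreach_subset_coreach (reach_of_pos A hxy))).not_gt hyx
  obtain ⟨x, hx⟩ := hb.exists_mem_spectrum_toSquareBlock hz
  let e : {y // b y = b x} ≃ scc A x :=
    { toFun := fun y => ⟨y.1, coreach_eq_coreach_iff.mp (toColex.injective y.2)⟩
      invFun := fun k => ⟨⟨k, Reach.trans x.2 k.2.1⟩,
        congrArg toColex (coreach_eq_coreach_iff.mpr k.2)⟩
      left_inv := fun _ => rfl
      right_inv := fun _ => rfl }
  refine ⟨x, x.2, hzρ ▸ ?_⟩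
  rw [sccRad_eq]
  have hze : z ∈ spectrum ℂ
      (Matrix.reindex e e ((toComplex (restrict A V)).toSquareBlock b (b x))) := by
    rw [spectrum_reindex]
    convert hx <;> rfl
  exact norm_le_specRad hze

variable (A) in
theorem tendsto_log_rowSum_pow_div {i : Fin N}
    (hcyc : ∃ j, Reach A i j ∧ ∃ m, 1 ≤ m ∧ 0 < (A ^ m) j j) :
    Tendsto (fun n : ℕ => Real.log ((∑ j, (A ^ n) i j : ℕ) : ℝ) / (n : ℝ)) atTop
      (𝓝 (sSup {x : ℝ | ∃ j, Reach A i j ∧ x = Real.log (sccRad A j)})) := by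
  set ρ := specRad (toComplex (restrict A {k | Reach A i k}))
  have hle : ∀ j, Reach A i j → sccRad A j ≤ ρ := by
    intro j hij
    rcases (sccRad_nonneg j).eq_or_lt with h0 | hpos
    · exact h0 ▸ specRad_nonneg _
    obtain ⟨K, hK, hlow⟩ :=
      exists_const_mul_sccRad_pow_le_rowSum hij (exists_pos_restrict_scc_of_sccRad_pos hpos)
    exact le_specRad_of_eventually_le_norm_pow _ hK hpos.le
      (hlow.mono fun n hn => hn.trans (rowSum_pow_le_norm_restrict_reachSet i n))
  obtain ⟨j₀, hij₀, m, hm, hj₀⟩ := hcyc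
  have hρ : 1 ≤ ρ := (one_le_sccRad (exists_pos_restrict_scc_of_cycle hm hj₀)).trans (hle j₀ hij₀)
  obtain ⟨j, hij, hρj⟩ := exists_reach_specRad_restrict_reachSet_le_sccRad (A := A) i
  have hj : sccRad A j = ρ := (hle j hij).antisymm hρj
  have hmax : IsGreatest {x | ∃ j, Reach A i j ∧ x = Real.log (sccRad A j)} (Real.log ρ) := by
    refine ⟨⟨j, hij, by rw [hj]⟩, ?_⟩
    rintro _ ⟨k, hik, rfl⟩
    rcases (sccRad_nonneg k).eq_or_lt with h0 | hpos
    · rw [← h0, Real.log_zero]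
      exact Real.log_nonneg hρ
    · exact Real.log_le_log hpos (hle k hik)
  rw [hmax.csSup_eq]
  obtain ⟨K, hK, hlow⟩ := exists_const_mul_sccRad_pow_le_rowSum hij
    (exists_pos_restrict_scc_of_sccRad_pos (by linarith))
  exact tendsto_log_div_of_le_of_le hK (by linarith) (hj ▸ hlow)
    (Eventually.of_forall (rowSum_pow_le_norm_restrict_reachSet i))
    (tendsto_norm_pow_rpow_specRad _)

end Growth

end PathGrowth

/-- Let `A` be the adjacency matrix of a finite directed multigraph with
vertices `1,…,N`.  (1) If some cycle is reachable from vertex `i`, then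
`(1/n) * log (i-th row sum of A^n)` converges to the maximum of `log ρ(B)` over the
strongly connected components `B` reachable from `i`.  (2) Symmetrically, if `i` is
reachable from some cycle, `(1/n) * log (i-th column sum of A^n)` converges to the maximum
of `log ρ(B)` over the strongly connected components `B` from which `i` is reachable. -/
theorem stmt5 {N : ℕ} (A : Matrix (Fin N) (Fin N) ℕ) (i : Fin N) :
    ((∃ j : Fin N, Reach A i j ∧ ∃ m : ℕ, 1 ≤ m ∧ 0 < (A ^ m) j j) →
      Filter.Tendsto
        (fun n : ℕ => Real.log ((∑ j, (A ^ n) i j : ℕ) : ℝ) / (n : ℝ))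
        Filter.atTop
        (nhds (sSup {x : ℝ | ∃ j : Fin N, Reach A i j ∧ x = Real.log (sccRad A j)})))
    ∧
    ((∃ j : Fin N, Reach A j i ∧ ∃ m : ℕ, 1 ≤ m ∧ 0 < (A ^ m) j j) →
      Filter.Tendsto
        (fun n : ℕ => Real.log ((∑ j, (A ^ n) j i : ℕ) : ℝ) / (n : ℝ))
        Filter.atTop
        (nhds (sSup {x : ℝ | ∃ j : Fin N, Reach A j i ∧ x = Real.log (sccRad A j)}))) := by
  refine ⟨PathGrowth.tendsto_log_rowSum_pow_div A, fun ⟨j, hji, m, hm, hj⟩ => ?_⟩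
  have hT := PathGrowth.tendsto_log_rowSum_pow_div A.transpose (i := i)
    ⟨j, (PathGrowth.reach_transpose A).mpr hji, m, hm, by rwa [← Matrix.transpose_pow]⟩
  simpa [PathGrowth.reach_transpose, PathGrowth.sccRad_transpose, ← Matrix.transpose_pow]
    using hT
end

section
/- Fix n ≥ 2 points v_1,…,v_n in cyclic order on a circle and let S be a set of chords (2-element subsets of the points) satisfying the crossing condition: whenever two chords s, s' ∈ S cross, all six chords joining pairs of the four endpoints of s and s' also belong to S. Let W be a subset of the points with |W| ≥ 2 such that every chord spanned by W belongs to S, and let s ∈ S be a chord that crosses at least one chord spanned by W. Then every chord spanned by W ∪ {endpoints of s} belongs to S. -/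
/-!
Write `s = {a, b}` with `a < b`. A chord of `W` crossing `s` has one endpoint `m` strictly
between `a` and `b` and one endpoint `o` outside `[a, b]`, so every other point `w` of `W` spans,
with `m` or with `o`, a chord of `W` that crosses `s`. The crossing condition applied to `s` and
that chord puts `{a, w}` and `{b, w}` into `S`.
-/

/-- Two chords (2-element subsets of the points `v_0 < v_1 < ⋯ < v_{n-1}` in cyclic order
on a circle) cross iff their endpoints strictly interleave in the cyclic order. -/
def Crosses {n : ℕ} (s t : Finset (Fin n)) : Prop :=
  ∃ a b c d : Fin n, a < b ∧ c < d ∧ s = {a, b} ∧ t = {c, d} ∧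
    ((a < c ∧ c < b ∧ b < d) ∨ (c < a ∧ a < d ∧ d < b))

def IsCrossingClosed {n : ℕ} (S : Set (Finset (Fin n))) : Prop :=
  ∀ s ∈ S, ∀ t ∈ S, Crosses s t → ∀ u : Finset (Fin n), u.card = 2 → u ⊆ s ∪ t → u ∈ S

section Chords

variable {n : ℕ}

theorem crosses_pair_of_lt_of_lt {a b x y : Fin n} (hax : a < x) (hxb : x < b)
    (hy : y < a ∨ b < y) : Crosses {a, b} {x, y} := by
  rcases hy with hy | hy
  · exact ⟨a, b, y, x, hax.trans hxb, hy.trans hax, rfl, Finset.pair_comm x y,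
      Or.inr ⟨hy, hax, hxb⟩⟩
  · exact ⟨a, b, x, y, hax.trans hxb, hxb.trans hy, rfl, rfl, Or.inl ⟨hax, hxb, hy⟩⟩

theorem Crosses.exists_mem_between_of_mem_outside {s t : Finset (Fin n)} (h : Crosses s t) :
    ∃ a b, a < b ∧ s = {a, b} ∧ ∃ m ∈ t, ∃ o ∈ t, a < m ∧ m < b ∧ (o < a ∨ b < o) := by
  obtain ⟨a, b, c, d, hab, -, rfl, rfl, hcd | hdc⟩ := h
  · exact ⟨a, b, hab, rfl, c, by simp, d, by simp, hcd.1, hcd.2.1, Or.inr hcd.2.2⟩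
  · exact ⟨a, b, hab, rfl, d, by simp, c, by simp, hdc.2.1, hdc.2.2, Or.inl hdc.1⟩

theorem exists_crosses_pair_of_ne {a b m o w : Fin n} (ham : a < m) (hmb : m < b)
    (ho : o < a ∨ b < o) (hwa : w ≠ a) (hwb : w ≠ b) :
    ∃ x, (x = m ∨ x = o) ∧ x ≠ w ∧ Crosses {a, b} {x, w} := by
  rcases hwa.lt_or_gt with hw | haw
  · exact ⟨m, Or.inl rfl, (hw.trans ham).ne', crosses_pair_of_lt_of_lt ham hmb (Or.inl hw)⟩
  rcases hwb.lt_or_gt with hwb | hbw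
  · have hwo : o ≠ w := by
      rcases ho with ho | ho
      · exact (ho.trans haw).ne
      · exact (hwb.trans ho).ne'
    exact ⟨o, Or.inr rfl, hwo,
      Finset.pair_comm w o ▸ crosses_pair_of_lt_of_lt haw hwb ho⟩
  · exact ⟨m, Or.inl rfl, (hmb.trans hbw).ne, crosses_pair_of_lt_of_lt ham hmb (Or.inr hbw)⟩

theorem IsCrossingClosed.pair_mem {S : Set (Finset (Fin n))} (hS : IsCrossingClosed S)
    {s t : Finset (Fin n)} (hs : s ∈ S) (ht : t ∈ S) (hst : Crosses s t) {x y : Fin n}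
    (hx : x ∈ s) (hy : y ∈ t) (hxy : x ≠ y) : {x, y} ∈ S :=
  hS s hs t ht hst _ (Finset.card_pair hxy) <|
    Finset.insert_subset (Finset.mem_union_left _ hx)
      (Finset.singleton_subset_iff.2 (Finset.mem_union_right _ hy))

theorem IsCrossingClosed.pair_mem_of_crosses_subset {S : Set (Finset (Fin n))}
    (hS : IsCrossingClosed S) {W s : Finset (Fin n)}
    (hWS : ∀ u : Finset (Fin n), u.card = 2 → u ⊆ W → u ∈ S) (hs : s ∈ S)
    {t : Finset (Fin n)} (htW : t ⊆ W) (hst : Crosses s t) :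
    ∀ w ∈ W, ∀ p ∈ s, w ≠ p → {w, p} ∈ S := by
  obtain ⟨a, b, hab, rfl, m, hm, o, ho, ham, hmb, hob⟩ :=
    hst.exists_mem_between_of_mem_outside
  intro w hw p hp hwp
  by_cases hws : w ∈ ({a, b} : Finset (Fin n))
  · have hsub : {w, p} ⊆ ({a, b} : Finset (Fin n)) :=
      Finset.insert_subset hws (Finset.singleton_subset_iff.2 hp)
    rwa [Finset.eq_of_subset_of_card_le hsub
      (by rw [Finset.card_pair hab.ne, Finset.card_pair hwp])]
  rw [Finset.mem_insert, Finset.mem_singleton, not_or] at hws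
  obtain ⟨x, hx, hxw, hcross⟩ := exists_crosses_pair_of_ne ham hmb hob hws.1 hws.2
  have hxW : x ∈ W := by rcases hx with rfl | rfl <;> exact htW ‹_›
  have hq : {x, w} ∈ S := hWS _ (Finset.card_pair hxw)
    (Finset.insert_subset hxW (Finset.singleton_subset_iff.2 hw))
  rw [Finset.pair_comm]
  exact hS.pair_mem hs hq hcross hp (by simp) hwp.symm

end Chords

theorem Finset.pair_mem_of_subset_union {α : Type*} [DecidableEq α] {S : Set (Finset α)} {A B : Finset α}
    (hA : ∀ u : Finset α, u.card = 2 → u ⊆ A → u ∈ S)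
    (hB : ∀ u : Finset α, u.card = 2 → u ⊆ B → u ∈ S)
    (hAB : ∀ x ∈ A, ∀ y ∈ B, x ≠ y → {x, y} ∈ S) :
    ∀ u : Finset α, u.card = 2 → u ⊆ A ∪ B → u ∈ S := by
  intro u hu hsub
  obtain ⟨x, y, hxy, rfl⟩ := Finset.card_eq_two.mp hu
  rw [Finset.insert_subset_iff, Finset.singleton_subset_iff, Finset.mem_union,
    Finset.mem_union] at hsub
  obtain ⟨hxA | hxB, hyA | hyB⟩ := hsub
  · exact hA _ hu (Finset.insert_subset hxA (Finset.singleton_subset_iff.2 hyA))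
  · exact hAB x hxA y hyB hxy
  · exact Finset.pair_comm y x ▸ hAB y hyA x hxB hxy.symm
  · exact hB _ hu (Finset.insert_subset hxB (Finset.singleton_subset_iff.2 hyB))

theorem stmt10_general {n : ℕ} (S : Set (Finset (Fin n)))
    (hchord : ∀ s ∈ S, s.card = 2)
    (hcross : ∀ s ∈ S, ∀ t ∈ S, Crosses s t →
      ∀ u : Finset (Fin n), u.card = 2 → u ⊆ s ∪ t → u ∈ S)
    (W : Finset (Fin n))
    (hWS : ∀ u : Finset (Fin n), u.card = 2 → u ⊆ W → u ∈ S)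
    (s : Finset (Fin n)) (hs : s ∈ S)
    (hcr : ∃ t : Finset (Fin n), t.card = 2 ∧ t ⊆ W ∧ Crosses s t) :
    ∀ u : Finset (Fin n), u.card = 2 → u ⊆ W ∪ s → u ∈ S := by
  have hsS : ∀ u : Finset (Fin n), u.card = 2 → u ⊆ s → u ∈ S := fun u hu hsub ↦
    Finset.eq_of_subset_of_card_le hsub (by rw [hu, hchord s hs]) ▸ hs
  obtain ⟨t, -, htW, hst⟩ := hcr
  exact Finset.pair_mem_of_subset_union hWS hsS
    (IsCrossingClosed.pair_mem_of_crosses_subset hcross hWS hs htW hst)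

/-- Fix `n ≥ 2` points on a circle and let `S` be a set of chords such
that whenever two chords of `S` cross, all six chords joining pairs of their four endpoints
also lie in `S`.  Let `W` be a set of at least two of the points all of whose spanned
chords lie in `S`, and let `s ∈ S` cross some chord spanned by `W`.  Then every chord
spanned by `W ∪ s` lies in `S`. -/
theorem stmt10 {n : ℕ} (hn : 2 ≤ n) (S : Set (Finset (Fin n)))
    (hchord : ∀ s ∈ S, s.card = 2)
    (hcross : ∀ s ∈ S, ∀ t ∈ S, Crosses s t →
      ∀ u : Finset (Fin n), u.card = 2 → u ⊆ s ∪ t → u ∈ S)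
    (W : Finset (Fin n)) (hW : 2 ≤ W.card)
    (hWS : ∀ u : Finset (Fin n), u.card = 2 → u ⊆ W → u ∈ S)
    (s : Finset (Fin n)) (hs : s ∈ S)
    (hcr : ∃ t : Finset (Fin n), t.card = 2 ∧ t ⊆ W ∧ Crosses s t) :
    ∀ u : Finset (Fin n), u.card = 2 → u ⊆ W ∪ s → u ∈ S :=
  stmt10_general S hchord hcross W hWS s hs hcr
end
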